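/- Let f : ℝⁿ → ℝ be convex and differentiable, T > 0, and let X : [0,T) → ℝⁿ solve 0 = Ẍ − (3/(t−T))Ẋ + 2∇f(X). Define Φ(t) = (2/(T−t)²)( f(X(t)) − f(X(T)) ) − (2/(T−t)⁴)‖X(t) − X(T)‖² + (1/(2(T−t)⁴))‖(T−t)Ẋ(t) + 2(X(t) − X(T))‖², where X(T) = lim_{t→T⁻} X(t) exists. Then Φ is nonincreasing on [0,T). -/

import Mathlib

open Filter MeasureTheory
open scoped RealInnerProductSpace Topology

/-!
Along the ODE, `Φ'(t) = (4 / (T - t)³) (f (X t) - f X_T - ⟪∇f (X t), X t - X_T⟫)`, which is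
nonpositive because the tangent plane of the convex `f` at `X t` lies below `f` at `X_T`.
The only place the ODE enters is the derivative of the rescaled velocity
`(T - t) Ẋ + 2 (X - X_T)`, which it turns into `-2 Ẋ - 2 (T - t) ∇f (X)`.
-/

section
variable {E : Type*} [NormedAddCommGroup E] [InnerProductSpace ℝ E]

theorem HasGradientAt.comp_hasDerivAt [CompleteSpace E] {f : E → ℝ} {g : E} {x : ℝ → E}
    {x' : E} {t : ℝ} (hf : HasGradientAt f g (x t)) (hx : HasDerivAt x x' t) :
    HasDerivAt (fun s => f (x s)) ⟪g, x'⟫ t :=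
  (hf.hasFDerivAt.comp_hasDerivAt t hx).congr_deriv (InnerProductSpace.toDual_apply_apply ..)

theorem hasDerivAt_const_div_sub_pow (c : ℝ) (n : ℕ) {T t : ℝ} (h : T - t ≠ 0) :
    HasDerivAt (fun s => c / (T - s) ^ n) (c * n / (T - t) ^ (n + 1)) t := by
  have hpow : HasDerivAt (fun s => (T - s) ^ n) (n * (T - t) ^ (n - 1) * -1) t :=
    ((hasDerivAt_id t).const_sub T).pow n
  refine ((hasDerivAt_const t c).div hpow (pow_ne_zero n h)).congr_deriv ?_
  rcases n with _ | n
  · simp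
  · rw [Nat.add_sub_cancel]
    field_simp
    ring

theorem hasDerivAt_ogmg_momentum {X X' X'' : ℝ → E} {G XT : E} {T t : ℝ} (htT : t ≠ T)
    (hX : HasDerivAt X (X' t) t) (hX' : HasDerivAt X' (X'' t) t)
    (hODE : X'' t - (3 / (t - T)) • X' t + (2:ℝ) • G = 0) :
    HasDerivAt (fun s => (T - s) • X' s + (2:ℝ) • (X s - XT))
      ((-2:ℝ) • X' t - (2 * (T - t)) • G) t := by
  have hX'' : X'' t = (3 / (t - T)) • X' t - (2:ℝ) • G := by
    rw [← sub_eq_zero, ← hODE]; module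
  have hτ : HasDerivAt (fun s : ℝ => T - s) (-1) t := by
    simpa using (hasDerivAt_id t).const_sub T
  refine ((hτ.smul hX').add ((hX.sub_const XT).const_smul (2:ℝ))).congr_deriv ?_
  have h3 : (T - t) * (3 / (t - T)) = -3 := by
    field_simp [sub_ne_zero.mpr htT]; ring
  rw [hX'', smul_sub, smul_smul, smul_smul, h3]
  module

noncomputable def ogmgLyapunov (f : E → ℝ) (T : ℝ) (X X' : ℝ → E) (XT : E) (t : ℝ) :
    ℝ :=
  (2 / (T - t) ^ 2) * (f (X t) - f XT)
    - (2 / (T - t) ^ 4) * ‖X t - XT‖ ^ 2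
    + (1 / (2 * (T - t) ^ 4)) * ‖(T - t) • X' t + (2:ℝ) • (X t - XT)‖ ^ 2

theorem hasDerivAt_ogmgLyapunov [CompleteSpace E] {f : E → ℝ} {G XT : E} {X X' X'' : ℝ → E}
    {T t : ℝ} (htT : t ≠ T) (hf : HasGradientAt f G (X t))
    (hX : HasDerivAt X (X' t) t) (hX' : HasDerivAt X' (X'' t) t)
    (hODE : X'' t - (3 / (t - T)) • X' t + (2:ℝ) • G = 0) :
    HasDerivAt (ogmgLyapunov f T X X' XT)
      (4 / (T - t) ^ 3 * (f (X t) - f XT - ⟪G, X t - XT⟫)) t := by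
  have hτ : T - t ≠ 0 := sub_ne_zero.mpr htT.symm
  have hpot := (hasDerivAt_const_div_sub_pow 2 2 hτ).mul
    ((hf.comp_hasDerivAt hX).sub_const (f XT))
  have hdist := (hasDerivAt_const_div_sub_pow 2 4 hτ).mul (hX.sub_const XT).norm_sq
  have hkin := (hasDerivAt_const_div_sub_pow (1 / 2) 4 hτ).mul
    (hasDerivAt_ogmg_momentum (XT := XT) htT hX hX' hODE).norm_sq
  have hΦ : ogmgLyapunov f T X X' XT = fun s => 2 / (T - s) ^ 2 * (f (X s) - f XT)
      - 2 / (T - s) ^ 4 * ‖X s - XT‖ ^ 2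
      + 1 / 2 / (T - s) ^ 4 * ‖(T - s) • X' s + (2:ℝ) • (X s - XT)‖ ^ 2 := by
    funext s; rw [ogmgLyapunov, div_mul_eq_div_div]
  rw [hΦ]
  refine ((hpot.sub hdist).add hkin).congr_deriv ?_
  have hnorm : ‖(T - t) • X' t + (2:ℝ) • (X t - XT)‖ ^ 2
      = (T - t) ^ 2 * ⟪X' t, X' t⟫ + 4 * (T - t) * ⟪X t - XT, X' t⟫
        + 4 * ‖X t - XT‖ ^ 2 := by
    rw [← real_inner_self_eq_norm_sq, ← real_inner_self_eq_norm_sq]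
    simp only [inner_add_left, inner_add_right, real_inner_smul_left, real_inner_smul_right,
      real_inner_comm (X' t) (X t - XT)]
    ring
  simp only [hnorm, inner_add_left, inner_sub_right, real_inner_smul_left, real_inner_smul_right,
    real_inner_comm (X' t) G, real_inner_comm (X t - XT) G]
  field_simp
  ring
end

theorem ogmg_ode_lyapunov_nonincreasing_general
    {E : Type*} [NormedAddCommGroup E] [InnerProductSpace ℝ E] [CompleteSpace E]
    (f : E → ℝ) (g : E → E)
    (hgrad : ∀ x, HasGradientAt f (g x) x)
    (hconv : ∀ x y, 0 ≤ f x - f y - ⟪g y, x - y⟫)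
    (T : ℝ)
    (X X' X'' : ℝ → E)
    (hX' : ∀ t ∈ Set.Ico (0:ℝ) T, HasDerivAt X (X' t) t)
    (hX'' : ∀ t ∈ Set.Ico (0:ℝ) T, HasDerivAt X' (X'' t) t)
    (hODE : ∀ t ∈ Set.Ico (0:ℝ) T,
      X'' t - (3 / (t - T)) • X' t + (2:ℝ) • g (X t) = 0)
    (XT : E) :
    AntitoneOn (fun t =>
        (2 / (T - t) ^ 2) * (f (X t) - f XT)
          - (2 / (T - t) ^ 4) * ‖X t - XT‖ ^ 2
          + (1 / (2 * (T - t) ^ 4)) * ‖(T - t) • X' t + (2:ℝ) • (X t - XT)‖ ^ 2)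
      (Set.Ico 0 T) := by
  have hΦ' : ∀ t ∈ Set.Ico 0 T, HasDerivAt (ogmgLyapunov f T X X' XT)
      (4 / (T - t) ^ 3 * (f (X t) - f XT - ⟪g (X t), X t - XT⟫)) t := fun t ht =>
    hasDerivAt_ogmgLyapunov ht.2.ne (hgrad _) (hX' t ht) (hX'' t ht) (hODE t ht)
  refine antitoneOn_of_hasDerivWithinAt_nonpos (convex_Ico 0 T)
    (fun t ht => (hΦ' t ht).continuousAt.continuousWithinAt)
    (fun t ht => (hΦ' t (interior_subset ht)).hasDerivWithinAt) fun t ht => ?_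
  have htT : 0 < T - t := sub_pos.mpr (interior_subset ht : t ∈ Set.Ico 0 T).2
  have hbregman : f (X t) - f XT - ⟪g (X t), X t - XT⟫ ≤ 0 := by
    have := hconv XT (X t)
    rw [← neg_sub (X t) XT, inner_neg_right] at this
    linarith
  exact mul_nonpos_of_nonneg_of_nonpos (by positivity) hbregman

theorem ogmg_ode_lyapunov_nonincreasing
    {E : Type*} [NormedAddCommGroup E] [InnerProductSpace ℝ E] [CompleteSpace E]
    (f : E → ℝ) (g : E → E)
    (hgrad : ∀ x, HasGradientAt f (g x) x)
    (hconv : ∀ x y, 0 ≤ f x - f y - ⟪g y, x - y⟫)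
    (T : ℝ) (hT : 0 < T)
    (X X' X'' : ℝ → E)
    (hX' : ∀ t ∈ Set.Ico (0:ℝ) T, HasDerivAt X (X' t) t)
    (hX'' : ∀ t ∈ Set.Ico (0:ℝ) T, HasDerivAt X' (X'' t) t)
    (hODE : ∀ t ∈ Set.Ico (0:ℝ) T,
      X'' t - (3 / (t - T)) • X' t + (2:ℝ) • g (X t) = 0)
    (XT : E) (hXT : Tendsto X (𝓝[<] T) (𝓝 XT)) :
    AntitoneOn (fun t =>
        (2 / (T - t) ^ 2) * (f (X t) - f XT)
          - (2 / (T - t) ^ 4) * ‖X t - XT‖ ^ 2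
          + (1 / (2 * (T - t) ^ 4)) * ‖(T - t) • X' t + (2:ℝ) • (X t - XT)‖ ^ 2)
      (Set.Ico 0 T) :=
  ogmg_ode_lyapunov_nonincreasing_general f g hgrad hconv T X X' X'' hX' hX'' hODE XT
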